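/- arXiv:2106.10143 — 3 statements merged into one kernel-verified Lean document; each statement's English description precedes it below -/
import Mathlib

section
/- The comultiplication satisfies Δ(K_{≥0}) ⊆ K_{≥0} ⊗ K_{≥0} + K_{>0} ⊗ B (as subspaces of B ⊗ B). -/
open TensorProduct

noncomputable section

/-- The standard inner product on `ℤ^θ`: `(α|ω) = Σ_i α_i ω_i`. -/
def innerZ {θ : ℕ} (α ω : Fin θ → ℤ) : ℤ := ∑ i, α i * ω i

variable {k : Type*} [Field k] {B : Type*} [Ring B] [Bialgebra k B]

/-- The image of `p ⊗ q` inside `B ⊗[k] B`, for submodules `p, q ⊆ B`. -/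
def tpSub (p q : Submodule k B) : Submodule k (B ⊗[k] B) :=
  LinearMap.range (TensorProduct.map p.subtype q.subtype)

variable {θ : ℕ}

/-- `B_{≥0} = ⊕_{(α|ω) ≥ 0} B^α`. -/
def Bge (𝒜 : (Fin θ → ℤ) → Submodule k B) (ω : Fin θ → ℤ) : Submodule k B :=
  ⨆ (α : Fin θ → ℤ) (_ : 0 ≤ innerZ α ω), 𝒜 α

/-- `B_{>0} = ⊕_{(α|ω) > 0} B^α`. -/
def Bgt (𝒜 : (Fin θ → ℤ) → Submodule k B) (ω : Fin θ → ℤ) : Submodule k B :=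
  ⨆ (α : Fin θ → ℤ) (_ : 0 < innerZ α ω), 𝒜 α

/-- `B_0 = ⊕_{(α|ω) = 0} B^α`. -/
def Bzero (𝒜 : (Fin θ → ℤ) → Submodule k B) (ω : Fin θ → ℤ) : Submodule k B :=
  ⨆ (α : Fin θ → ℤ) (_ : innerZ α ω = 0), 𝒜 α

/-- `K_{≥0} = {x ∈ B : Δ(x) ∈ B_{≥0} ⊗ B}`. -/
def Kge (𝒜 : (Fin θ → ℤ) → Submodule k B) (ω : Fin θ → ℤ) : Submodule k B :=
  Submodule.comap (Coalgebra.comul (R := k)) (tpSub (Bge 𝒜 ω) ⊤)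

/-- `K_{>0} = K_{≥0} ∩ B_{>0}`. -/
def Kgt (𝒜 : (Fin θ → ℤ) → Submodule k B) (ω : Fin θ → ℤ) : Submodule k B :=
  Kge 𝒜 ω ⊓ Bgt 𝒜 ω

/-- `K_0 = K_{≥0} ∩ B_0`. -/
def Kzero (𝒜 : (Fin θ → ℤ) → Submodule k B) (ω : Fin θ → ℤ) : Submodule k B :=
  Kge 𝒜 ω ⊓ Bzero 𝒜 ω


/-!
Write `π_S` for the projection of `B` onto the homogeneous components whose degrees lie in `S`,
and `Φ = (π_{<0} ⊗ id) ∘ Δ`, so that `K_{≥0} = ker Φ`. Since `Δ` is graded, `Φ ∘ π_S` is `Φ`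
followed by a total-degree projection of `B ⊗ B`; hence `K_{≥0}` is a graded subspace.

For `x ∈ K_{≥0}`, coassociativity gives `(Φ ⊗ id) Δx = 0`, and since tensoring over a field is
exact, `Δx ∈ K_{≥0} ⊗ B`. Split `Δx = (π_{>0} ⊗ id) Δx + (π_{≤0} ⊗ id) Δx`. The first summand lies
in `K_{>0} ⊗ B` because `K_{≥0}` is graded. For the second, coassociativity turns
`(id ⊗ Φ)(π_{≤0} ⊗ id) Δx` into `((π_{≤0} ⊗ π_{<0}) Δ ⊗ id) Δx`, and `(π_{≤0} ⊗ π_{<0}) Δ`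
factors through `π_{<0}` since a degree `≤ 0` plus a degree `< 0` is `< 0`; so it vanishes, and
exactness on the right puts the summand in `K_{≥0} ⊗ K_{≥0}`.
-/

theorem iSupIndep_of_projections {R M ι : Type*} [Ring R] [AddCommGroup M] [Module R M]
    {t : ι → Submodule R M} (e : ι → M →ₗ[R] M) (he : ∀ i, ∀ x ∈ t i, e i x = x)
    (he' : ∀ i j, i ≠ j → t j ≤ LinearMap.ker (e i)) : iSupIndep t := by
  refine iSupIndep_def.2 fun i => Submodule.disjoint_def.2 fun x hx hx' => ?_
  have hker : ⨆ (j) (_ : j ≠ i), t j ≤ LinearMap.ker (e i) :=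
    iSup₂_le fun j hj => he' i j (Ne.symm hj)
  rw [← he i x hx]
  exact hker hx'

namespace DirectSum.IsInternal

variable {R M ι : Type*} [Ring R] [AddCommGroup M] [Module R M] [DecidableEq ι]
  {𝒢 : ι → Submodule R M}

theorem isCompl_biSup_compl (h : IsInternal 𝒢) (S : Set ι) :
    IsCompl (⨆ i ∈ S, 𝒢 i) (⨆ i ∈ Sᶜ, 𝒢 i) where
  disjoint := h.submodule_iSupIndep.disjoint_biSup_biSup disjoint_compl_right
  codisjoint := by
    rw [codisjoint_iff, ← iSup_union, Set.union_compl_self, iSup_univ, h.submodule_iSup_eq_top]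

def proj (h : IsInternal 𝒢) (S : Set ι) : M →ₗ[R] M :=
  Submodule.projection _ _ (h.isCompl_biSup_compl S)

variable (h : IsInternal 𝒢) {S T : Set ι}

theorem proj_apply_of_mem_biSup {x : M} (hx : x ∈ ⨆ i ∈ S, 𝒢 i) : h.proj S x = x :=
  Submodule.projection_apply_of_mem_left _ hx

theorem proj_apply_of_mem_biSup_compl {x : M} (hx : x ∈ ⨆ i ∈ Sᶜ, 𝒢 i) : h.proj S x = 0 :=
  (Submodule.projection_apply_eq_zero_iff _).2 hx

theorem proj_apply_eq_self {i : ι} {x : M} (hx : x ∈ 𝒢 i) (hi : i ∈ S) : h.proj S x = x :=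
  h.proj_apply_of_mem_biSup (le_biSup 𝒢 hi hx)

theorem proj_apply_eq_zero {i : ι} {x : M} (hx : x ∈ 𝒢 i) (hi : i ∉ S) : h.proj S x = 0 :=
  h.proj_apply_of_mem_biSup_compl (le_biSup 𝒢 (Set.mem_compl hi) hx)

theorem ker_proj : LinearMap.ker (h.proj S) = ⨆ i ∈ Sᶜ, 𝒢 i :=
  Submodule.ker_projection _

theorem range_proj : LinearMap.range (h.proj S) = ⨆ i ∈ S, 𝒢 i :=
  Submodule.range_projection _

include h in
theorem linearMap_ext {N : Type*} [AddCommGroup N] [Module R N] {f g : M →ₗ[R] N}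
    (H : ∀ i, ∀ x ∈ 𝒢 i, f x = g x) : f = g := by
  have : ⨆ i, 𝒢 i ≤ LinearMap.eqLocus f g := iSup_le fun i x hx => H i x hx
  exact LinearMap.ext fun x => this (h.submodule_iSup_eq_top ▸ Submodule.mem_top)

theorem proj_comp_proj : h.proj S ∘ₗ h.proj T = h.proj (S ∩ T) := by
  refine h.linearMap_ext fun i x hx => ?_
  by_cases hT : i ∈ T
  · by_cases hS : i ∈ S
    · simp [h.proj_apply_eq_self hx hT, h.proj_apply_eq_self hx hS,
        h.proj_apply_eq_self hx (Set.mem_inter hS hT)]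
    · simp [h.proj_apply_eq_self hx hT, h.proj_apply_eq_zero hx hS,
        h.proj_apply_eq_zero hx fun hST : i ∈ S ∩ T => hS hST.1]
  · simp [h.proj_apply_eq_zero hx hT, h.proj_apply_eq_zero hx fun hST : i ∈ S ∩ T => hT hST.2]

theorem proj_univ : h.proj Set.univ = LinearMap.id :=
  h.linearMap_ext fun _ _ hx => h.proj_apply_eq_self hx (Set.mem_univ _)

theorem proj_add_proj_compl : h.proj S + h.proj Sᶜ = LinearMap.id := by
  refine h.linearMap_ext fun i x hx => ?_
  by_cases hS : i ∈ S
  · simp [h.proj_apply_eq_self hx hS, h.proj_apply_eq_zero hx (Set.notMem_compl_iff.2 hS)]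
  · simp [h.proj_apply_eq_zero hx hS, h.proj_apply_eq_self hx (Set.mem_compl hS)]

end DirectSum.IsInternal

theorem DirectSum.IsInternal.rTensor_proj_add_rTensor_proj_compl {R M N ι : Type*} [CommRing R]
    [AddCommGroup M] [Module R M] [AddCommGroup N] [Module R N] [DecidableEq ι]
    {𝒢 : ι → Submodule R M} (h : DirectSum.IsInternal 𝒢) (S : Set ι) (t : M ⊗[R] N) :
    (h.proj S).rTensor N t + (h.proj Sᶜ).rTensor N t = t := by
  rw [← LinearMap.add_apply, ← LinearMap.rTensor_add, h.proj_add_proj_compl, LinearMap.rTensor_id,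
    LinearMap.id_apply]

theorem tpSub_eq_map₂ (p q : Submodule k B) :
    tpSub p q = Submodule.map₂ (TensorProduct.mk k B B) p q :=
  range_mapIncl p q

theorem tpSub_mono {p p' q q' : Submodule k B} (hp : p ≤ p') (hq : q ≤ q') :
    tpSub p q ≤ tpSub p' q' :=
  range_mapIncl_mono hp hq

theorem tpSub_top_top : tpSub (⊤ : Submodule k B) ⊤ = ⊤ := by
  rw [tpSub_eq_map₂, map₂_mk_top_top_eq_top]

theorem rTensor_mem_tpSub (f : B →ₗ[k] B) {p q : Submodule k B} {t : B ⊗[k] B}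
    (ht : t ∈ tpSub p q) : f.rTensor B t ∈ tpSub (p.map f) q := by
  rw [tpSub_eq_map₂] at ht ⊢
  refine Submodule.mem_comap.1
    ((Submodule.map₂_le.2 fun a ha b hb => ?_ : _ ≤ Submodule.comap (f.rTensor B) _) ht)
  exact Submodule.apply_mem_map₂ _ (Submodule.mem_map_of_mem ha) hb

theorem mem_tpSub_inf_ker_left {W : Type*} [AddCommGroup W] [Module k W] (f : B →ₗ[k] W)
    {p q : Submodule k B} {t : B ⊗[k] B} (ht : t ∈ tpSub p q) (hf : f.rTensor B t = 0) :
    t ∈ tpSub (p ⊓ LinearMap.ker f) q := by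
  obtain ⟨s, rfl⟩ := ht
  have hs : (f ∘ₗ p.subtype).rTensor q s = 0 := by
    refine Module.Flat.lTensor_preserves_injective_linearMap (M := W) q.subtype
      q.injective_subtype ?_
    rw [map_zero, ← hf, ← LinearMap.comp_apply, ← LinearMap.comp_apply]
    congr 1
    ext a b
    rfl
  have hexact : Function.Exact ((LinearMap.ker (f ∘ₗ p.subtype)).subtype.rTensor q)
      ((f ∘ₗ p.subtype).rTensor q) :=
    Module.Flat.rTensor_exact q (LinearMap.exact_subtype_ker_map _)
  obtain ⟨w, rfl⟩ := (hexact s).1 hs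
  refine ⟨TensorProduct.map ((p.subtype ∘ₗ (LinearMap.ker (f ∘ₗ p.subtype)).subtype).codRestrict
    (p ⊓ LinearMap.ker f) fun m => ⟨(m : p).2, m.2⟩) LinearMap.id w, ?_⟩
  rw [← LinearMap.comp_apply, ← LinearMap.comp_apply]
  congr 1
  ext a b
  rfl

theorem tpSub_ker_top {W : Type*} [AddCommGroup W] [Module k W] (f : B →ₗ[k] W) :
    tpSub (LinearMap.ker f) ⊤ = LinearMap.ker (f.rTensor B) := by
  refine le_antisymm ?_ fun t ht => ?_
  · rw [tpSub_eq_map₂, Submodule.map₂_le]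
    intro a ha b _
    simp [LinearMap.mem_ker.1 ha]
  · have htop : t ∈ tpSub (⊤ : Submodule k B) ⊤ := by
      rw [tpSub_top_top]
      exact Submodule.mem_top
    simpa using mem_tpSub_inf_ker_left f htop ht

theorem comm_mem_tpSub {p q : Submodule k B} {t : B ⊗[k] B} (ht : t ∈ tpSub p q) :
    TensorProduct.comm k B B t ∈ tpSub q p := by
  obtain ⟨s, rfl⟩ := ht
  exact ⟨TensorProduct.comm k p q s, map_comm _ _ s⟩

theorem mem_tpSub_inf_ker_right {W : Type*} [AddCommGroup W] [Module k W] (f : B →ₗ[k] W)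
    {p q : Submodule k B} {t : B ⊗[k] B} (ht : t ∈ tpSub p q) (hf : f.lTensor B t = 0) :
    t ∈ tpSub p (q ⊓ LinearMap.ker f) := by
  have hf' : f.rTensor B (TensorProduct.comm k B B t) = 0 := by
    rw [LinearMap.rTensor, map_comm, ← LinearMap.lTensor, hf, map_zero]
  simpa using comm_mem_tpSub (mem_tpSub_inf_ker_left f (comm_mem_tpSub ht) hf')

section TensorGrading

variable {ι : Type*} [DecidableEq ι] {𝒜 : ι → Submodule k B}

def tensorGrading (𝒜 : ι → Submodule k B) (pq : ι × ι) : Submodule k (B ⊗[k] B) :=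
  tpSub (𝒜 pq.1) (𝒜 pq.2)

variable (h : DirectSum.IsInternal 𝒜) {S T : Set ι} {p q : ι} {t : B ⊗[k] B}

theorem map_proj_apply_eq_self (ht : t ∈ tpSub (𝒜 p) (𝒜 q)) (hp : p ∈ S) (hq : q ∈ T) :
    TensorProduct.map (h.proj S) (h.proj T) t = t := by
  rw [tpSub_eq_map₂] at ht
  refine (Submodule.map₂_le.2 fun a ha b hb => ?_ :
    _ ≤ LinearMap.eqLocus (TensorProduct.map (h.proj S) (h.proj T)) LinearMap.id) ht
  simp [h.proj_apply_eq_self ha hp, h.proj_apply_eq_self hb hq]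

theorem map_proj_apply_eq_zero (ht : t ∈ tpSub (𝒜 p) (𝒜 q)) (hpq : ¬(p ∈ S ∧ q ∈ T)) :
    TensorProduct.map (h.proj S) (h.proj T) t = 0 := by
  rw [tpSub_eq_map₂] at ht
  refine (Submodule.map₂_le.2 fun a ha b hb => ?_ :
    _ ≤ LinearMap.ker (TensorProduct.map (h.proj S) (h.proj T))) ht
  rw [not_and_or] at hpq
  rcases hpq with hp | hq
  · simp [h.proj_apply_eq_zero ha hp]
  · simp [h.proj_apply_eq_zero hb hq]

theorem DirectSum.IsInternal.tensor (h : DirectSum.IsInternal 𝒜) :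
    DirectSum.IsInternal (tensorGrading 𝒜) := by
  refine DirectSum.isInternal_submodule_of_iSupIndep_of_iSup_eq_top ?_ ?_
  · refine iSupIndep_of_projections (fun pq => TensorProduct.map (h.proj {pq.1}) (h.proj {pq.2}))
      (fun pq t ht => map_proj_apply_eq_self h ht rfl rfl) fun pq pq' hne t ht => ?_
    exact map_proj_apply_eq_zero h ht fun hpq => hne (Prod.ext hpq.1 hpq.2).symm
  · have : ⨆ pq, tensorGrading 𝒜 pq =
        Submodule.map₂ (TensorProduct.mk k B B) (⨆ p, 𝒜 p) (⨆ q, 𝒜 q) := by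
      simp_rw [Submodule.map₂_iSup_left, Submodule.map₂_iSup_right, iSup_prod, tensorGrading,
        tpSub_eq_map₂]
    rw [this, h.submodule_iSup_eq_top, map₂_mk_top_top_eq_top]

theorem map_proj_proj : TensorProduct.map (h.proj S) (h.proj T) = h.tensor.proj (S ×ˢ T) := by
  refine h.tensor.linearMap_ext fun pq t ht => ?_
  by_cases hpq : pq ∈ S ×ˢ T
  · rw [map_proj_apply_eq_self h ht hpq.1 hpq.2, h.tensor.proj_apply_eq_self ht hpq]
  · rw [map_proj_apply_eq_zero h ht hpq, h.tensor.proj_apply_eq_zero ht hpq]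

theorem rTensor_proj : (h.proj S).rTensor B = h.tensor.proj (S ×ˢ Set.univ) := by
  rw [← map_proj_proj, h.proj_univ]
  rfl

end TensorGrading

section Coassoc

variable {R C M M' : Type*} [CommSemiring R] [AddCommMonoid C] [Module R C] [Coalgebra R C]
  [AddCommMonoid M] [Module R M] [AddCommMonoid M'] [Module R M']

open Coalgebra

theorem rTensor_rTensor_comp_comul_comp_comul (π : C →ₗ[R] M) :
    (π.rTensor C ∘ₗ comul).rTensor C ∘ₗ comul =
      (TensorProduct.assoc R M C C).symm.toLinearMap ∘ₗ comul.lTensor M ∘ₗ π.rTensor C ∘ₗ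
        comul := by
  rw [LinearMap.rTensor_comp, LinearMap.comp_assoc, ← coassoc_symm]
  simp only [← LinearMap.comp_assoc]
  congr 1
  ext x y
  simp [LinearMap.rTensor, map_map_assoc_symm]

theorem map_rTensor_comp_comul_comp_comul (σ : C →ₗ[R] M') (π : C →ₗ[R] M) :
    TensorProduct.map σ (π.rTensor C ∘ₗ comul) ∘ₗ comul =
      (TensorProduct.assoc R M' M C).toLinearMap ∘ₗ (TensorProduct.map σ π ∘ₗ comul).rTensor C ∘ₗ
        comul := by
  rw [← LinearMap.comp_id σ, map_comp, LinearMap.comp_assoc, LinearMap.comp_id,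
    ← LinearMap.lTensor, ← coassoc, LinearMap.rTensor_comp]
  simp only [← LinearMap.comp_assoc]
  congr 2
  ext x y z
  simp

end Coassoc
section GradedCoalgebra

open Coalgebra

variable {ι : Type*} [DecidableEq ι] {𝒜 : ι → Submodule k B}
  (h : DirectSum.IsInternal 𝒜)

def leftProjComul (N : Set ι) : B →ₗ[k] B ⊗[k] B :=
  (h.proj N).rTensor B ∘ₗ comul

variable {h} {N : Set ι} {x : B}

theorem leftProjComul_rTensor_comul (hx : leftProjComul h N x = 0) :
    (leftProjComul h N).rTensor B (comul x) = 0 := by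
  have := LinearMap.congr_fun (rTensor_rTensor_comp_comul_comp_comul (h.proj N)) x
  simp only [LinearMap.comp_apply] at this
  rw [leftProjComul, this, ← LinearMap.comp_apply (LinearMap.rTensor B (h.proj N)), ← leftProjComul,
    hx, map_zero, map_zero]

variable [Add ι] (hcomul : ∀ (γ : ι), ∀ x ∈ 𝒜 γ, comul (R := k) x ∈
  ⨆ (pq : ι × ι) (_ : pq.1 + pq.2 = γ), tpSub (𝒜 pq.1) (𝒜 pq.2))
include hcomul

theorem comul_comp_proj (S : Set ι) :
    comul ∘ₗ h.proj S = h.tensor.proj {pq | pq.1 + pq.2 ∈ S} ∘ₗ comul := by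
  refine h.linearMap_ext fun γ a ha => ?_
  by_cases hγ : γ ∈ S
  · rw [LinearMap.comp_apply, h.proj_apply_eq_self ha hγ, LinearMap.comp_apply,
      h.tensor.proj_apply_of_mem_biSup]
    exact biSup_mono (f := tensorGrading 𝒜) (q := (· ∈ {pq | pq.1 + pq.2 ∈ S}))
      (fun pq (hpq : pq.1 + pq.2 = γ) => show pq.1 + pq.2 ∈ S from hpq ▸ hγ) (hcomul γ a ha)
  · rw [LinearMap.comp_apply, h.proj_apply_eq_zero ha hγ, map_zero, LinearMap.comp_apply,
      h.tensor.proj_apply_of_mem_biSup_compl]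
    exact biSup_mono (f := tensorGrading 𝒜) (q := (· ∈ {pq | pq.1 + pq.2 ∈ S}ᶜ))
      (fun pq (hpq : pq.1 + pq.2 = γ) => show pq.1 + pq.2 ∉ S from hpq ▸ hγ)
      (hcomul γ a ha)

theorem map_proj_comp_comul_comp_proj {S T U : Set ι} (hSTU : ∀ r ∈ S, ∀ s ∈ T, r + s ∈ U) :
    TensorProduct.map (h.proj S) (h.proj T) ∘ₗ comul ∘ₗ h.proj U =
      TensorProduct.map (h.proj S) (h.proj T) ∘ₗ comul := by
  have hsub : S ×ˢ T ⊆ {pq : ι × ι | pq.1 + pq.2 ∈ U} := fun pq hpq => hSTU _ hpq.1 _ hpq.2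
  rw [comul_comp_proj hcomul, map_proj_proj, ← LinearMap.comp_assoc, h.tensor.proj_comp_proj,
    Set.inter_eq_left.2 hsub]

theorem proj_mem_ker_leftProjComul (S : Set ι) (hx : x ∈ LinearMap.ker (leftProjComul h N)) :
    h.proj S x ∈ LinearMap.ker (leftProjComul h N) := by
  have hcomm : leftProjComul h N ∘ₗ h.proj S =
      h.tensor.proj {pq | pq.1 + pq.2 ∈ S} ∘ₗ leftProjComul h N := by
    rw [leftProjComul, LinearMap.comp_assoc, comul_comp_proj hcomul, rTensor_proj,
      ← LinearMap.comp_assoc, h.tensor.proj_comp_proj, Set.inter_comm, ← h.tensor.proj_comp_proj,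
      LinearMap.comp_assoc]
  rw [LinearMap.mem_ker, ← LinearMap.comp_apply, hcomm, LinearMap.comp_apply,
    LinearMap.mem_ker.1 hx, map_zero]

theorem leftProjComul_lTensor_rTensor_proj_comul {S : Set ι}
    (hSN : ∀ r ∈ S, ∀ s ∈ N, r + s ∈ N) (hx : leftProjComul h N x = 0) :
    (leftProjComul h N).lTensor B ((h.proj S).rTensor B (comul x)) = 0 := by
  have hcoassoc := LinearMap.congr_fun
    (map_rTensor_comp_comul_comp_comul (h.proj S) (h.proj N)) x
  simp only [LinearMap.comp_apply] at hcoassoc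
  rw [← LinearMap.comp_apply (LinearMap.lTensor B _), LinearMap.lTensor_comp_rTensor,
    leftProjComul, hcoassoc, ← map_proj_comp_comul_comp_proj hcomul hSN]
  simp only [LinearMap.rTensor_comp, LinearMap.comp_apply]
  rw [← LinearMap.comp_apply (LinearMap.rTensor B (h.proj N)), ← leftProjComul, hx, map_zero,
    map_zero, map_zero]

end GradedCoalgebra

theorem innerZ_add (α β ω : Fin θ → ℤ) : innerZ (α + β) ω = innerZ α ω + innerZ β ω := by
  simp [innerZ, add_mul, Finset.sum_add_distrib]

section Kge

variable {𝒜 : (Fin θ → ℤ) → Submodule k B} (h : DirectSum.IsInternal 𝒜) (ω : Fin θ → ℤ)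

theorem Bge_eq_ker_proj : Bge 𝒜 ω = LinearMap.ker (h.proj {α | innerZ α ω < 0}) := by
  rw [h.ker_proj, Bge]
  simp only [Set.mem_compl_iff, Set.mem_ofPred_eq, not_lt]

theorem Kge_eq_ker_leftProjComul :
    Kge 𝒜 ω = LinearMap.ker (leftProjComul h {α | innerZ α ω < 0}) := by
  rw [Kge, Bge_eq_ker_proj h, tpSub_ker_top, leftProjComul, LinearMap.ker_comp]

variable {h}
  (hcomul : ∀ (γ : Fin θ → ℤ), ∀ x ∈ 𝒜 γ, Coalgebra.comul (R := k) x ∈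
    ⨆ (pq : (Fin θ → ℤ) × (Fin θ → ℤ)) (_ : pq.1 + pq.2 = γ), tpSub (𝒜 pq.1) (𝒜 pq.2))
include hcomul

theorem map_proj_Kge_le (S : Set (Fin θ → ℤ)) : (Kge 𝒜 ω).map (h.proj S) ≤ Kge 𝒜 ω := by
  rw [Submodule.map_le_iff_le_comap, Kge_eq_ker_leftProjComul h]
  exact fun x hx => proj_mem_ker_leftProjComul hcomul S hx

end Kge

theorem statement4_general
    (𝒜 : (Fin θ → ℤ) → Submodule k B)
    (hinternal : DirectSum.IsInternal 𝒜)
    (hcomul : ∀ (γ : Fin θ → ℤ), ∀ x ∈ 𝒜 γ,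
      Coalgebra.comul (R := k) x ∈
        ⨆ (pq : (Fin θ → ℤ) × (Fin θ → ℤ)) (_ : pq.1 + pq.2 = γ), tpSub (𝒜 pq.1) (𝒜 pq.2))
    (ω : Fin θ → ℤ) :
    ∀ x ∈ Kge 𝒜 ω, Coalgebra.comul (R := k) x ∈
      tpSub (Kge 𝒜 ω) (Kge 𝒜 ω) ⊔ tpSub (Kgt 𝒜 ω) ⊤ := by
  intro x hx
  have hK := Kge_eq_ker_leftProjComul hinternal ω
  rw [hK] at hx
  have hΔx : Coalgebra.comul x ∈ tpSub (Kge 𝒜 ω) ⊤ := by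
    rw [hK, tpSub_ker_top]
    exact leftProjComul_rTensor_comul hx
  rw [← hinternal.rTensor_proj_add_rTensor_proj_compl {α | 0 < innerZ α ω} (Coalgebra.comul x)]
  refine add_mem (Submodule.mem_sup_right ?_) (Submodule.mem_sup_left ?_)
  · refine tpSub_mono (le_inf (map_proj_Kge_le ω hcomul _) ?_) le_rfl (rTensor_mem_tpSub _ hΔx)
    exact LinearMap.map_le_range.trans hinternal.range_proj.le
  · have hPN : ∀ r ∈ {α | 0 < innerZ α ω}ᶜ, ∀ s ∈ {α | innerZ α ω < 0},
        r + s ∈ {α | innerZ α ω < 0} := fun r hr s hs =>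
      show innerZ (r + s) ω < 0 by rw [innerZ_add]; exact add_neg_of_nonpos_of_neg (not_lt.1 hr) hs
    refine tpSub_mono (map_proj_Kge_le ω hcomul _) (hK ▸ inf_le_right)
      (mem_tpSub_inf_ker_right _ (rTensor_mem_tpSub _ hΔx)
        (leftProjComul_lTensor_rTensor_proj_comul hcomul hPN hx))

/-- `Δ(K_{≥0}) ⊆ K_{≥0} ⊗ K_{≥0} + K_{>0} ⊗ B`. -/
theorem statement4 (hθ : 0 < θ)
    (𝒜 : (Fin θ → ℤ) → Submodule k B)
    (hinternal : DirectSum.IsInternal 𝒜)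
    (hone : (1 : B) ∈ 𝒜 0)
    (hmul : ∀ (α β : Fin θ → ℤ) (x y : B), x ∈ 𝒜 α → y ∈ 𝒜 β → x * y ∈ 𝒜 (α + β))
    (hcomul : ∀ (γ : Fin θ → ℤ), ∀ x ∈ 𝒜 γ,
      Coalgebra.comul (R := k) x ∈
        ⨆ (pq : (Fin θ → ℤ) × (Fin θ → ℤ)) (_ : pq.1 + pq.2 = γ), tpSub (𝒜 pq.1) (𝒜 pq.2))
    (hcounit : ∀ (γ : Fin θ → ℤ), γ ≠ 0 → ∀ x ∈ 𝒜 γ, Coalgebra.counit (R := k) x = 0)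
    (ω : Fin θ → ℤ) :
    ∀ x ∈ Kge 𝒜 ω, Coalgebra.comul (R := k) x ∈
      tpSub (Kge 𝒜 ω) (Kge 𝒜 ω) ⊔ tpSub (Kgt 𝒜 ω) ⊤ :=
  statement4_general 𝒜 hinternal hcomul ω
end
end

section
/- There is no 3×3 braiding matrix q of Cartan type whose generalized Cartan matrix C^q equals the compactly hyperbolic matrix [[2, −1, −2], [−1, 2, −1], [−1, −1, 2]]. (Indeed, the Cartan relations would force q_{11} = q_{22} = q_{33} = q with q^{-1} = q^{-2}, hence q = 1, contradicting c^q_{12} = −1.) -/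
noncomputable section

variable {k : Type*} [Field k]

/-- The quantum number `(n)_t = 1 + t + ⋯ + t^{n-1}`. -/
def qnum (t : k) (n : ℕ) : k := ∑ j ∈ Finset.range n, t ^ j

/-- `q̃_{ij} = q_{ij} q_{ji}`. -/
def qt {θ : ℕ} (q : Fin θ → Fin θ → k) (i j : Fin θ) : k := q i j * q j i

/-- One can reflect `q` at `i`: for every `j ≠ i` there is an `n ∈ ℕ₀` with
`(n+1)_{q_{ii}} (1 − q_{ii}^n q̃_{ij}) = 0`. -/
def CanReflect {θ : ℕ} (q : Fin θ → Fin θ → k) (i : Fin θ) : Prop :=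
  ∀ j, j ≠ i → ∃ n : ℕ, qnum (q i i) (n + 1) * (1 - q i i ^ n * qt q i j) = 0

/-- The entry `c^q_{ij}` of the generalized Cartan matrix of `q`:
`c^q_{ii} = 2` and `c^q_{ij} = −min{n ∈ ℕ₀ : (n+1)_{q_{ii}}(1 − q_{ii}^n q̃_{ij}) = 0}`
for `j ≠ i`. -/
def cq {θ : ℕ} (q : Fin θ → Fin θ → k) (i j : Fin θ) : ℤ :=
  if i = j then 2
  else -((sInf {n : ℕ | qnum (q i i) (n + 1) * (1 - q i i ^ n * qt q i j) = 0} : ℕ) : ℤ)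

/-- `q` is of Cartan type: one can reflect `q` at every `i` and
`q_{ii}^{c^q_{ij}} = q̃_{ij}` for all `i ≠ j`. -/
def IsCartanType {θ : ℕ} (q : Fin θ → Fin θ → k) : Prop :=
  (∀ i, CanReflect q i) ∧ ∀ i j, i ≠ j → q i i ^ cq q i j = qt q i j

/-- The reflected braiding matrix `ρ_i q`, with entries
`t_{jl} = q_{jl} q_{il}^{−c^q_{ij}} q_{ji}^{−c^q_{il}} q_{ii}^{c^q_{ij} c^q_{il}}`. -/
def rho {θ : ℕ} (q : Fin θ → Fin θ → k) (i : Fin θ) : Fin θ → Fin θ → k :=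
  fun j l =>
    q j l * q i l ^ (-(cq q i j)) * q j i ^ (-(cq q i l)) * q i i ^ (cq q i j * cq q i l)

/-- The reflection `s_i^q` of `ℤ^θ`, determined by `s_i^q(α_j) = α_j − c^q_{ij} α_i`
on the canonical basis. -/
def sRef {θ : ℕ} (q : Fin θ → Fin θ → k) (i : Fin θ) : (Fin θ → ℤ) → (Fin θ → ℤ) :=
  fun v l => v l - (if l = i then ∑ j, cq q i j * v j else 0)

/-- `x` is a root of unity. -/
def IsRootOfUnity (x : k) : Prop := ∃ N : ℕ, 0 < N ∧ x ^ N = 1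

/-- There is no 3×3 braiding matrix of Cartan type whose generalized Cartan matrix is the
compactly hyperbolic matrix `[[2, −1, −2], [−1, 2, −1], [−1, −1, 2]]`. -/
theorem statement8 [IsAlgClosed k] [CharZero k] :
    ¬ ∃ q : Fin 3 → Fin 3 → k, (∀ i j, q i j ≠ 0) ∧ IsCartanType q ∧
      (∀ i j, cq q i j = !![2, -1, -2; -1, 2, -1; -1, -1, 2] i j) := by
  rintro ⟨q, hne, ⟨hrefl, hcart⟩, hc⟩
  have e01 : cq q 0 1 = -1 := by simpa using hc 0 1
  have e10 : cq q 1 0 = -1 := by simpa using hc 1 0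
  have e12 : cq q 1 2 = -1 := by simpa using hc 1 2
  have e21 : cq q 2 1 = -1 := by simpa using hc 2 1
  have e02 : cq q 0 2 = -2 := by simpa using hc 0 2
  have e20 : cq q 2 0 = -1 := by simpa using hc 2 0
  have h01 := hcart 0 1 (by decide); rw [e01] at h01
  have h10 := hcart 1 0 (by decide); rw [e10] at h10
  have h12 := hcart 1 2 (by decide); rw [e12] at h12
  have h21 := hcart 2 1 (by decide); rw [e21] at h21
  have h02 := hcart 0 2 (by decide); rw [e02] at h02
  have h20 := hcart 2 0 (by decide); rw [e20] at h20
  have hsym : ∀ i j : Fin 3, qt q i j = qt q j i := fun i j => mul_comm _ _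
  have n00 := hne 0 0
  have n11 := hne 1 1
  have n22 := hne 2 2
  -- q00 = q11
  have hab : q 0 0 = q 1 1 := by
    have : (q 0 0)⁻¹ = (q 1 1)⁻¹ := by
      rw [← zpow_neg_one, ← zpow_neg_one, h01, h10, hsym]
    exact inv_injective this
  have hbc : q 1 1 = q 2 2 := by
    have : (q 1 1)⁻¹ = (q 2 2)⁻¹ := by
      rw [← zpow_neg_one, ← zpow_neg_one, h12, h21, hsym]
    exact inv_injective this
  have ha1 : q 0 0 = 1 := by
    have key : q 0 0 ^ (-2 : ℤ) = q 0 0 ^ (-1 : ℤ) := by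
      rw [h02, hsym, ← h20, ← hbc, ← hab]
    have : q 0 0 ^ (-2 : ℤ) * q 0 0 ^ (2 : ℤ) = q 0 0 ^ (-1 : ℤ) * q 0 0 ^ (2 : ℤ) := by
      rw [key]
    rw [← zpow_add₀ n00, ← zpow_add₀ n00] at this
    norm_num at this
    exact this.symm
  have hq01 : qt q 0 1 = 1 := by
    rw [← h01, ha1, one_zpow]
  -- now cq q 0 1 = 0, contradiction
  have hmem : (0 : ℕ) ∈ {n : ℕ | qnum (q 0 0) (n + 1) * (1 - q 0 0 ^ n * qt q 0 1) = 0} := by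
    simp [Set.mem_setOf_eq, hq01]
  have hinf : sInf {n : ℕ | qnum (q 0 0) (n + 1) * (1 - q 0 0 ^ n * qt q 0 1) = 0} = 0 :=
    Nat.sInf_eq_zero.mpr (Or.inl hmem)
  rw [cq, if_neg (by decide), hinf] at e01
  norm_num at e01
end
end

section
/- Suppose one can reflect the braiding matrix q at the index i. Then one can reflect the matrix ρ_i q at i as well, and: (1) c^{ρ_i q}_{ij} = c^q_{ij} for all j; (2) the reflection is involutive, ρ_i(ρ_i q) = q entrywise; and consequently (3) s_i^{ρ_i q} = s_i^q as automorphisms of ℤ^θ, where s_i^q is defined by s_i^q(α_j) = α_j − c^q_{ij} α_i on the canonical basis (α_j). -/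
noncomputable section

variable {k : Type*} [Field k]

lemma qnum_eq_zero_iff [CharZero k] (t : k) (n : ℕ) :
    qnum t (n+1) = 0 ↔ t ^ (n+1) = 1 ∧ t ≠ 1 := by
  rcases eq_or_ne t 1 with h | h
  · subst h
    simp [qnum]
    exact Nat.cast_add_one_ne_zero n
  · rw [qnum, geom_sum_eq h]
    rw [div_eq_zero_iff, sub_eq_zero]
    simp [sub_eq_zero, h]

lemma reflect_core [CharZero k] (t x : k) (ht : t ≠ 0) (m : ℕ)
    (hm : qnum t (m+1) * (1 - t^m * x) = 0)
    (hmin : ∀ n < m, qnum t (n+1) * (1 - t^n * x) ≠ 0) :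
    qnum t (m+1) * (1 - t^m * (x⁻¹ * (t^(2*m))⁻¹)) = 0 ∧
    ∀ n < m, qnum t (n+1) * (1 - t^n * (x⁻¹ * (t^(2*m))⁻¹)) ≠ 0 := by
  by_cases hc : t ^ m * x = 1
  · have hx' : x⁻¹ * (t^(2*m))⁻¹ = x := by
      have h1 : x⁻¹ = t ^ m := inv_eq_of_mul_eq_one_left hc
      have h2 : x = (t ^ m)⁻¹ := eq_inv_of_mul_eq_one_right hc
      rw [h1, h2, two_mul, pow_add, mul_inv, ← mul_assoc,
        mul_inv_cancel₀ (pow_ne_zero m ht), one_mul]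
    rw [hx']
    exact ⟨hm, hmin⟩
  · have h1 : qnum t (m+1) = 0 := by
      rcases mul_eq_zero.1 hm with h | h
      · exact h
      · exact absurd (by linear_combination -h) hc
    obtain ⟨ht1, htne⟩ := (qnum_eq_zero_iff t m).1 h1
    refine ⟨by rw [h1, zero_mul], ?_⟩
    intro n hn hcon
    have hqn : qnum t (n+1) ≠ 0 := fun h => hmin n hn (by rw [h, zero_mul])
    have h2 : t^n * (x⁻¹ * (t^(2*m))⁻¹) = 1 := by
      have := (mul_eq_zero.1 hcon).resolve_left hqn
      linear_combination -this
    have hxne : x ≠ 0 := by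
      intro h0; rw [h0] at h2; simp at h2
    have hx_eq : x = t^n * (t^(2*m))⁻¹ := by
      field_simp at h2
      rw [h2, mul_assoc, mul_inv_cancel₀ (pow_ne_zero _ ht), mul_one]
    apply hmin (m - n - 1) (by omega)
    have h2m : t ^ (2*m) = t ^ (m-1) := by
      have : 2*m = (m+1) + (m-1) := by omega
      rw [this, pow_add, ht1, one_mul]
    have key : t ^ (m-n-1) * x = 1 := by
      rw [hx_eq, h2m, ← mul_assoc, ← pow_add]
      have : m - n - 1 + n = m - 1 := by omega
      rw [this, mul_inv_cancel₀ (pow_ne_zero _ ht)]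
    rw [key]
    simp

lemma cq_self {θ : ℕ} (q : Fin θ → Fin θ → k) (i : Fin θ) : cq q i i = 2 := if_pos rfl

lemma rho_ii {θ : ℕ} (q : Fin θ → Fin θ → k) (i : Fin θ) (h : q i i ≠ 0) :
    rho q i i i = q i i := by
  simp only [rho, cq_self]
  have e : ∀ m n : ℤ, q i i ^ m * q i i ^ n = q i i ^ (m + n) := fun m n => (zpow_add₀ h m n).symm
  nth_rewrite 1 [← zpow_one (q i i)]
  rw [e, e, e]
  norm_num

lemma rho_il {θ : ℕ} (q : Fin θ → Fin θ → k) (i l : Fin θ) (hil : q i l ≠ 0) (hii : q i i ≠ 0) :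
    rho q i i l = (q i l)⁻¹ * q i i ^ (cq q i l) := by
  simp only [rho, cq_self]
  nth_rewrite 1 [← zpow_one (q i l)]
  rw [← zpow_add₀ hil, mul_assoc, ← zpow_add₀ hii]
  norm_num
  rw [show -cq q i l + 2 * cq q i l = cq q i l by ring]
  exact Or.inl rfl

lemma rho_ji {θ : ℕ} (q : Fin θ → Fin θ → k) (i j : Fin θ) (hji : q j i ≠ 0) (hii : q i i ≠ 0) :
    rho q i j i = (q j i)⁻¹ * q i i ^ (cq q i j) := by
  simp only [rho, cq_self]
  rw [mul_right_comm (q j i)]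
  nth_rewrite 1 [← zpow_one (q j i)]
  rw [← zpow_add₀ hji, mul_assoc, ← zpow_add₀ hii]
  norm_num
  rw [show -cq q i j + cq q i j * 2 = cq q i j by ring]
  exact Or.inl rfl

lemma qt_rho {θ : ℕ} (q : Fin θ → Fin θ → k) (i j : Fin θ)
    (hij : q i j ≠ 0) (hji : q j i ≠ 0) (hii : q i i ≠ 0) :
    qt (rho q i) i j = (qt q i j)⁻¹ * q i i ^ (2 * cq q i j) := by
  rw [qt, rho_il q i j hij hii, rho_ji q i j hji hii, qt, mul_inv]
  rw [show (2 : ℤ) * cq q i j = cq q i j + cq q i j by ring, zpow_add₀ hii]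
  ring

lemma inv_identity (a b c d : k) (hb : b ≠ 0) (hc : c ≠ 0) (hd : d ≠ 0) (x y : ℤ) :
    (a * b ^ (-x) * c ^ (-y) * d ^ (x*y)) * (b⁻¹ * d ^ y)^(-x) * (c⁻¹ * d ^ x)^(-y) * d^(x*y)
      = a := by
  rw [mul_zpow, mul_zpow, inv_zpow, inv_zpow, ← zpow_neg b, ← zpow_neg c, neg_neg, neg_neg,
    ← zpow_mul, ← zpow_mul]
  have hb2 : b^(-x) * b^x = 1 := by rw [← zpow_add₀ hb]; simp
  have hc2 : c^(-y) * c^y = 1 := by rw [← zpow_add₀ hc]; simp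
  have hd2 : d^(x*y) * d^(y*(-x)) = 1 := by rw [← zpow_add₀ hd]; ring_nf; simp
  have hd3 : d^(x*(-y)) * d^(x*y) = 1 := by rw [← zpow_add₀ hd]; ring_nf; simp
  calc a * b^(-x) * c^(-y) * d^(x*y) * (b^x * d^(y*(-x))) * (c^y * d^(x*(-y))) * d^(x*y)
      = a * (b^(-x)*b^x) * (c^(-y)*c^y) * (d^(x*y)*d^(y*(-x))) * (d^(x*(-y))*d^(x*y)) := by ring
    _ = a := by rw [hb2, hc2, hd2, hd3]; ring

/-- If one can reflect `q` at `i`, then one can reflect `ρ_i q` at `i`,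
`c^{ρ_i q}_{ij} = c^q_{ij}` for all `j`, `ρ_i(ρ_i q) = q` entrywise, and
`s_i^{ρ_i q} = s_i^q` as maps on `ℤ^θ`. -/
theorem statement10 [IsAlgClosed k] [CharZero k] {θ : ℕ}
    (q : Fin θ → Fin θ → k) (hq : ∀ i j, q i j ≠ 0) (i : Fin θ) (hi : CanReflect q i) :
    CanReflect (rho q i) i ∧
    (∀ j, cq (rho q i) i j = cq q i j) ∧
    (∀ j l, rho (rho q i) i j l = q j l) ∧
    sRef (rho q i) i = sRef q i := by
  have hii : q i i ≠ 0 := hq i i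
  -- per-index core facts
  have core : ∀ j, j ≠ i →
      qnum (q i i) (sInf {n : ℕ | qnum (q i i) (n + 1) * (1 - q i i ^ n * qt q i j) = 0} + 1) *
        (1 - q i i ^ (sInf {n : ℕ | qnum (q i i) (n + 1) * (1 - q i i ^ n * qt q i j) = 0}) *
          ((qt q i j)⁻¹ *
            (q i i ^ (2 * sInf {n : ℕ | qnum (q i i) (n + 1) *
              (1 - q i i ^ n * qt q i j) = 0}))⁻¹)) = 0 ∧
      ∀ n < sInf {n : ℕ | qnum (q i i) (n + 1) * (1 - q i i ^ n * qt q i j) = 0},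
        qnum (q i i) (n + 1) * (1 - q i i ^ n *
          ((qt q i j)⁻¹ *
            (q i i ^ (2 * sInf {n : ℕ | qnum (q i i) (n + 1) *
              (1 - q i i ^ n * qt q i j) = 0}))⁻¹)) ≠ 0 := by
    intro j hji
    have hne : {n : ℕ | qnum (q i i) (n + 1) * (1 - q i i ^ n * qt q i j) = 0}.Nonempty :=
      hi j hji
    exact reflect_core (q i i) (qt q i j) hii _ (Nat.sInf_mem hne)
      (fun n hn => Nat.notMem_of_lt_sInf hn)
  -- the rewriting of `qt (rho q i) i j` for j ≠ i
  have hqtr : ∀ j, j ≠ i → qt (rho q i) i j =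
      (qt q i j)⁻¹ * (q i i ^ (2 * sInf {n : ℕ | qnum (q i i) (n + 1) *
        (1 - q i i ^ n * qt q i j) = 0}))⁻¹ := by
    intro j hji
    have hc_eq : cq q i j =
        -((sInf {n : ℕ | qnum (q i i) (n + 1) * (1 - q i i ^ n * qt q i j) = 0} : ℕ) : ℤ) := by
      rw [cq, if_neg (fun h => hji h.symm)]
    rw [qt_rho q i j (hq i j) (hq j i) hii, hc_eq]
    congr 1
    rw [show (2:ℤ) * -((sInf {n : ℕ | qnum (q i i) (n + 1) *
        (1 - q i i ^ n * qt q i j) = 0} : ℕ) : ℤ) =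
        -((2 * sInf {n : ℕ | qnum (q i i) (n + 1) * (1 - q i i ^ n * qt q i j) = 0} : ℕ) : ℤ)
      by push_cast; ring, zpow_neg, zpow_natCast]
  -- Part 1: CanReflect
  have part1 : CanReflect (rho q i) i := by
    intro j hji
    refine ⟨sInf {n : ℕ | qnum (q i i) (n + 1) * (1 - q i i ^ n * qt q i j) = 0}, ?_⟩
    rw [rho_ii q i hii, hqtr j hji]
    exact (core j hji).1
  -- Part 2: cq equality
  have part2 : ∀ j, cq (rho q i) i j = cq q i j := by
    intro j
    rcases eq_or_ne j i with rfl | hji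
    · rw [cq_self, cq_self]
    · have hij' : ¬ i = j := fun h => hji h.symm
      rw [cq, if_neg hij', cq, if_neg hij', rho_ii q i hii, hqtr j hji]
      congr 2
      set m := sInf {n : ℕ | qnum (q i i) (n + 1) * (1 - q i i ^ n * qt q i j) = 0} with hm
      have hmem : m ∈ {n : ℕ | qnum (q i i) (n + 1) * (1 - q i i ^ n *
          ((qt q i j)⁻¹ * (q i i ^ (2 * m))⁻¹)) = 0} := (core j hji).1
      have hle : sInf {n : ℕ | qnum (q i i) (n + 1) * (1 - q i i ^ n *
          ((qt q i j)⁻¹ * (q i i ^ (2 * m))⁻¹)) = 0} ≤ m := Nat.sInf_le hmem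
      rcases lt_or_eq_of_le hle with hlt | heq
      · exact absurd (Nat.sInf_mem ⟨m, hmem⟩) ((core j hji).2 _ hlt)
      · exact heq
  -- Part 3: involution
  have part3 : ∀ j l, rho (rho q i) i j l = q j l := by
    intro j l
    show rho q i j l * rho q i i l ^ (-(cq (rho q i) i j)) *
        rho q i j i ^ (-(cq (rho q i) i l)) *
        rho q i i i ^ (cq (rho q i) i j * cq (rho q i) i l) = q j l
    rw [part2 j, part2 l, rho_ii q i hii, rho_il q i l (hq i l) hii, rho_ji q i j (hq j i) hii]
    show q j l * q i l ^ (-(cq q i j)) * q j i ^ (-(cq q i l)) *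
        q i i ^ (cq q i j * cq q i l) * ((q i l)⁻¹ * q i i ^ cq q i l) ^ (-(cq q i j)) *
        ((q j i)⁻¹ * q i i ^ cq q i j) ^ (-(cq q i l)) *
        q i i ^ (cq q i j * cq q i l) = q j l
    exact inv_identity (q j l) (q i l) (q j i) (q i i) (hq i l) (hq j i) hii
      (cq q i j) (cq q i l)
  refine ⟨part1, part2, part3, ?_⟩
  funext v l
  simp only [sRef, part2]
end
end
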